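/- arXiv:1312.6431 — 3 statements merged into one kernel-verified Lean document; each statement's English description precedes it below -/
import Mathlib

section
/- Let f : ℝ × ℝ → ℝ be three times continuously differentiable and everywhere positive, and g₁, g₂ : ℝ × ℝ → ℂ twice continuously differentiable, in the variables (y,s), satisfying everywhere the bilinear system f_{sy} g_i − f_s g_{i,y} − f_y g_{i,s} + f g_{i,sy} = f·g_i (i = 1,2) and 2(f_{ss} f − f_s²) = (1/2)(|g₁|² + |g₂|²). Define φ(y,s) = y − 2 f_s(y,s)/f(y,s), and suppose Q₁, Q₂ : ℝ × ℝ → ℂ are twice continuously differentiable and satisfy g_i(y,s)/f(y,s) = Q_i(φ(y,s), −s) for all (y,s) and i = 1,2. Then at every point (y,s) where 1 − 2(log f)_{sy}(y,s) ≠ 0, for each i = 1,2 the coupled complex short pulse equation holds at the image point: Q_{i,xt} + Q_i + (1/2)((|Q₁|² + |Q₂|²) Q_{i,x})_x = 0 evaluated at (φ(y,s), −s), where subscripts x, t denote partial derivatives of Q_i in its first and second arguments. -/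
/-!
Put `h = g / f` and `L = log f`, so that `φ = y - 2 L_s`. Expanding `g = f h`, the bilinear
equation `D_s D_y f·g = f g` becomes `h_{sy} = h (1 - 2 L_{sy}) = h φ_y`, while the second bilinear
equation says `φ_s = -2 L_{ss} = -R ∘ ψ / 2` with `R = |Q₁|² + |Q₂|²` and `ψ = (φ, -s)`.
Writing `h = Q ∘ ψ`, the chain rule gives `h_s = -(R Q_x / 2 + Q_t) ∘ ψ`, and differentiating once
more in `y`, `h_{sy} = -φ_y (Q_{xt} + (R Q_x)_x / 2) ∘ ψ`. Comparing the two expressions for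
`h_{sy}` and dividing by `φ_y ≠ 0` gives the CCSP equation at `ψ`.
-/

open Complex

/-- Partial derivative in the first variable of a complex-valued function. -/
noncomputable def pd1C (F : ℝ → ℝ → ℂ) (y s : ℝ) : ℂ := deriv (fun y' => F y' s) y

/-- Partial derivative in the second variable of a complex-valued function. -/
noncomputable def pd2C (F : ℝ → ℝ → ℂ) (y s : ℝ) : ℂ := deriv (fun s' => F y s') s

/-- Partial derivative in the first variable of a real-valued function. -/
noncomputable def pd1R (F : ℝ → ℝ → ℝ) (y s : ℝ) : ℝ := deriv (fun y' => F y' s) y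

/-- Partial derivative in the second variable of a real-valued function. -/
noncomputable def pd2R (F : ℝ → ℝ → ℝ) (y s : ℝ) : ℝ := deriv (fun s' => F y s') s


open Function

section PartialDeriv

variable {E : Type*} [NormedAddCommGroup E] [NormedSpace ℝ E]

-- `pd1C` and `pd1R` (resp. `pd2C`, `pd2R`) are definitionally `pd₁` (resp. `pd₂`) at `E = ℂ, ℝ`.
noncomputable def pd₁ (F : ℝ → ℝ → E) (y s : ℝ) : E := deriv (fun y' => F y' s) y

noncomputable def pd₂ (F : ℝ → ℝ → E) (y s : ℝ) : E := deriv (fun s' => F y s') s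

variable {F : ℝ → ℝ → E} {y s : ℝ}

theorem hasDerivAt_fderiv_uncurry_fst (h : DifferentiableAt ℝ ↿F (y, s)) :
    HasDerivAt (F · s) (fderiv ℝ ↿F (y, s) (1, 0)) y :=
  h.hasFDerivAt.comp_hasDerivAt (l := ↿F) y ((hasDerivAt_id' y).prodMk (hasDerivAt_const y s))

theorem hasDerivAt_fderiv_uncurry_snd (h : DifferentiableAt ℝ ↿F (y, s)) :
    HasDerivAt (F y ·) (fderiv ℝ ↿F (y, s) (0, 1)) s :=
  h.hasFDerivAt.comp_hasDerivAt (l := ↿F) s ((hasDerivAt_const s y).prodMk (hasDerivAt_id' s))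

theorem pd₁_eq_fderiv (h : DifferentiableAt ℝ ↿F (y, s)) :
    pd₁ F y s = fderiv ℝ ↿F (y, s) (1, 0) :=
  (hasDerivAt_fderiv_uncurry_fst h).deriv

theorem pd₂_eq_fderiv (h : DifferentiableAt ℝ ↿F (y, s)) :
    pd₂ F y s = fderiv ℝ ↿F (y, s) (0, 1) :=
  (hasDerivAt_fderiv_uncurry_snd h).deriv

theorem hasDerivAt_pd₁ (h : DifferentiableAt ℝ ↿F (y, s)) : HasDerivAt (F · s) (pd₁ F y s) y :=
  pd₁_eq_fderiv h ▸ hasDerivAt_fderiv_uncurry_fst h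

theorem hasDerivAt_pd₂ (h : DifferentiableAt ℝ ↿F (y, s)) : HasDerivAt (F y ·) (pd₂ F y s) s :=
  pd₂_eq_fderiv h ▸ hasDerivAt_fderiv_uncurry_snd h

theorem fderiv_uncurry_apply (h : DifferentiableAt ℝ ↿F (y, s)) (a b : ℝ) :
    fderiv ℝ ↿F (y, s) (a, b) = a • pd₁ F y s + b • pd₂ F y s := by
  have hab : ((a, b) : ℝ × ℝ) = a • ((1 : ℝ), (0 : ℝ)) + b • ((0 : ℝ), (1 : ℝ)) := by simp
  rw [hab, map_add, map_smul, map_smul, pd₁_eq_fderiv h, pd₂_eq_fderiv h]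

theorem uncurry_pd₁ (h : Differentiable ℝ ↿F) : ↿(pd₁ F) = fun p => fderiv ℝ ↿F p (1, 0) :=
  funext fun p => pd₁_eq_fderiv (h p)

theorem uncurry_pd₂ (h : Differentiable ℝ ↿F) : ↿(pd₂ F) = fun p => fderiv ℝ ↿F p (0, 1) :=
  funext fun p => pd₂_eq_fderiv (h p)

theorem contDiff_uncurry_pd₁ {m n : WithTop ℕ∞} (h : ContDiff ℝ n ↿F) (hmn : m + 1 ≤ n) :
    ContDiff ℝ m ↿(pd₁ F) :=
  uncurry_pd₁ ((h.of_le (le_add_self.trans hmn)).differentiable one_ne_zero) ▸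
    (h.fderiv_right hmn).clm_apply contDiff_const

theorem contDiff_uncurry_pd₂ {m n : WithTop ℕ∞} (h : ContDiff ℝ n ↿F) (hmn : m + 1 ≤ n) :
    ContDiff ℝ m ↿(pd₂ F) :=
  uncurry_pd₂ ((h.of_le (le_add_self.trans hmn)).differentiable one_ne_zero) ▸
    (h.fderiv_right hmn).clm_apply contDiff_const

theorem pd₂_pd₁_comm (h : ContDiff ℝ 2 ↿F) (y s : ℝ) : pd₂ (pd₁ F) y s = pd₁ (pd₂ F) y s := by
  have hd : Differentiable ℝ ↿F := h.differentiable two_ne_zero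
  have hd' : DifferentiableAt ℝ (fderiv ℝ ↿F) (y, s) :=
    (h.fderiv_right (m := 1) (by norm_num)).differentiable one_ne_zero _
  have hsymm := (h.contDiffAt (x := (y, s))).isSymmSndFDerivAt
    (by simp [minSmoothness_of_isRCLikeNormedField]) (0, 1) (1, 0)
  have hfderiv_apply (v w : ℝ × ℝ) : fderiv ℝ (fun q => fderiv ℝ ↿F q v) (y, s) w
      = fderiv ℝ (fderiv ℝ ↿F) (y, s) w v := by
    rw [fderiv_clm_apply hd' (differentiableAt_const v)]; simp
  have hd₁ : DifferentiableAt ℝ ↿(pd₁ F) (y, s) :=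
    (contDiff_uncurry_pd₁ (m := 1) h (by norm_num)).differentiable one_ne_zero _
  have hd₂ : DifferentiableAt ℝ ↿(pd₂ F) (y, s) :=
    (contDiff_uncurry_pd₂ (m := 1) h (by norm_num)).differentiable one_ne_zero _
  rw [pd₂_eq_fderiv hd₁, pd₁_eq_fderiv hd₂, uncurry_pd₁ hd, uncurry_pd₂ hd, hfderiv_apply,
    hfderiv_apply, hsymm]

theorem pd₁_comp {G : ℝ → ℝ → E} {φ χ : ℝ → ℝ → ℝ}
    (hG : DifferentiableAt ℝ ↿G (φ y s, χ y s))
    (hφ : DifferentiableAt ℝ (φ · s) y) (hχ : DifferentiableAt ℝ (χ · s) y) :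
    pd₁ (fun y s => G (φ y s) (χ y s)) y s
      = pd₁ φ y s • pd₁ G (φ y s) (χ y s) + pd₁ χ y s • pd₂ G (φ y s) (χ y s) := by
  rw [← fderiv_uncurry_apply hG]
  exact (hG.hasFDerivAt.comp_hasDerivAt (l := ↿G) y (hφ.hasDerivAt.prodMk hχ.hasDerivAt)).deriv

theorem pd₂_comp {G : ℝ → ℝ → E} {φ χ : ℝ → ℝ → ℝ}
    (hG : DifferentiableAt ℝ ↿G (φ y s, χ y s))
    (hφ : DifferentiableAt ℝ (φ y ·) s) (hχ : DifferentiableAt ℝ (χ y ·) s) :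
    pd₂ (fun y s => G (φ y s) (χ y s)) y s
      = pd₂ φ y s • pd₁ G (φ y s) (χ y s) + pd₂ χ y s • pd₂ G (φ y s) (χ y s) := by
  rw [← fderiv_uncurry_apply hG]
  exact (hG.hasFDerivAt.comp_hasDerivAt (l := ↿G) s (hφ.hasDerivAt.prodMk hχ.hasDerivAt)).deriv

theorem pd₁_pd₂_comp_hodograph {Q : ℝ → ℝ → E} {φ R : ℝ → ℝ → ℝ}
    (hQ : ContDiff ℝ 2 ↿Q) (hR : ContDiff ℝ 1 ↿R) (hφ : Differentiable ℝ ↿φ)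
    (hφR : ∀ y s, pd₂ φ y s = -(1 / 2) * R (φ y s) (-s)) (y s : ℝ) :
    pd₁ (pd₂ fun y s => Q (φ y s) (-s)) y s
      = -pd₁ φ y s • (pd₂ (pd₁ Q) (φ y s) (-s)
          + (1 / 2 : ℝ) • pd₁ (fun x t => R x t • pd₁ Q x t) (φ y s) (-s)) := by
  have hQ₁ : ContDiff ℝ 1 ↿(pd₁ Q) := contDiff_uncurry_pd₁ hQ (by norm_num)
  have hQ₂ : ContDiff ℝ 1 ↿(pd₂ Q) := contDiff_uncurry_pd₂ hQ (by norm_num)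
  have hRQ₁ : ContDiff ℝ 1 ↿(fun x t => R x t • pd₁ Q x t) := hR.smul hQ₁
  set G : ℝ → ℝ → E := fun x t => -((1 / 2 : ℝ) • (R x t • pd₁ Q x t)) - pd₂ Q x t
  have hG : Differentiable ℝ ↿G :=
    ((hRQ₁.const_smul (1 / 2 : ℝ)).neg.sub hQ₂).differentiable one_ne_zero
  have hneg₁ : pd₁ (fun _ s => -s) y s = 0 := deriv_const _ _
  have hneg₂ (y s : ℝ) : pd₂ (fun _ s => -s) y s = -1 := by simp [pd₂]
  have hslice₁ (y s : ℝ) : DifferentiableAt ℝ (φ · s) y := (hasDerivAt_pd₁ (hφ _)).differentiableAt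
  have hslice₂ (y s : ℝ) : DifferentiableAt ℝ (φ y ·) s := (hasDerivAt_pd₂ (hφ _)).differentiableAt
  have hpd₂ : pd₂ (fun y s => Q (φ y s) (-s)) = fun y s => G (φ y s) (-s) := by
    funext y s
    rw [pd₂_comp (χ := fun _ s => -s) (hQ.differentiable two_ne_zero _) (hslice₂ y s)
      (hasDerivAt_neg s).differentiableAt, hφR, hneg₂]
    simp only [G, smul_smul]
    module
  have hpd₁G : pd₁ G (φ y s) (-s) = -((1 / 2 : ℝ) • pd₁ (fun x t => R x t • pd₁ Q x t) (φ y s) (-s))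
      - pd₁ (pd₂ Q) (φ y s) (-s) :=
    (((hasDerivAt_pd₁ (hRQ₁.differentiable one_ne_zero _)).const_smul (1 / 2 : ℝ)).neg.sub
      (hasDerivAt_pd₁ (hQ₂.differentiable one_ne_zero _))).deriv
  rw [hpd₂, pd₁_comp (χ := fun _ s => -s) (hG _) (hslice₁ y s) (differentiableAt_const _), hneg₁,
    hpd₁G, pd₂_pd₁_comm hQ]
  module

theorem pd₁_mul {𝔸 : Type*} [NormedRing 𝔸] [NormedAlgebra ℝ 𝔸] {A B : ℝ → ℝ → 𝔸}
    (hA : DifferentiableAt ℝ ↿A (y, s)) (hB : DifferentiableAt ℝ ↿B (y, s)) :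
    pd₁ (fun y s => A y s * B y s) y s = pd₁ A y s * B y s + A y s * pd₁ B y s :=
  ((hasDerivAt_pd₁ hA).mul (hasDerivAt_pd₁ hB)).deriv

theorem pd₂_mul {𝔸 : Type*} [NormedRing 𝔸] [NormedAlgebra ℝ 𝔸] {A B : ℝ → ℝ → 𝔸}
    (hA : DifferentiableAt ℝ ↿A (y, s)) (hB : DifferentiableAt ℝ ↿B (y, s)) :
    pd₂ (fun y s => A y s * B y s) y s = pd₂ A y s * B y s + A y s * pd₂ B y s :=
  ((hasDerivAt_pd₂ hA).mul (hasDerivAt_pd₂ hB)).deriv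

end PartialDeriv

theorem pd₁_ofReal {f : ℝ → ℝ → ℝ} (hf : Differentiable ℝ ↿f) :
    pd₁ (fun y s => (f y s : ℂ)) = fun y s => ((pd₁ f y s : ℝ) : ℂ) :=
  funext₂ fun _ _ => (hasDerivAt_pd₁ (hf _)).ofReal_comp.deriv

theorem pd₂_ofReal {f : ℝ → ℝ → ℝ} (hf : Differentiable ℝ ↿f) :
    pd₂ (fun y s => (f y s : ℂ)) = fun y s => ((pd₂ f y s : ℝ) : ℂ) :=
  funext₂ fun _ _ => (hasDerivAt_pd₂ (hf _)).ofReal_comp.deriv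

theorem pd₂_log {f : ℝ → ℝ → ℝ} (hf : Differentiable ℝ ↿f) (hf0 : ∀ y s, f y s ≠ 0) :
    pd₂ (fun y s => Real.log (f y s)) = fun y s => pd₂ f y s / f y s :=
  funext₂ fun y s => ((hasDerivAt_pd₂ (hf _)).log (hf0 y s)).deriv

theorem pd₁_pd₂_log {f : ℝ → ℝ → ℝ} (hf : ContDiff ℝ 2 ↿f) (hf0 : ∀ y s, f y s ≠ 0)
    (y s : ℝ) :
    pd₁ (pd₂ fun y s => Real.log (f y s)) y s
      = (pd₁ (pd₂ f) y s * f y s - pd₂ f y s * pd₁ f y s) / f y s ^ 2 := by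
  rw [pd₂_log (hf.differentiable two_ne_zero) hf0]
  exact ((hasDerivAt_pd₁ ((contDiff_uncurry_pd₂ hf (by norm_num)).differentiable one_ne_zero _)).div
    (hasDerivAt_pd₁ (hf.differentiable two_ne_zero _)) (hf0 y s)).deriv

theorem pd₂_pd₂_log {f : ℝ → ℝ → ℝ} (hf : ContDiff ℝ 2 ↿f) (hf0 : ∀ y s, f y s ≠ 0)
    (y s : ℝ) :
    pd₂ (pd₂ fun y s => Real.log (f y s)) y s
      = (pd₂ (pd₂ f) y s * f y s - pd₂ f y s ^ 2) / f y s ^ 2 := by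
  rw [pd₂_log (hf.differentiable two_ne_zero) hf0, sq (pd₂ f y s)]
  exact ((hasDerivAt_pd₂ ((contDiff_uncurry_pd₂ hf (by norm_num)).differentiable one_ne_zero _)).div
    (hasDerivAt_pd₂ (hf.differentiable two_ne_zero _)) (hf0 y s)).deriv

noncomputable def hirotaDsDy (F G : ℝ → ℝ → ℂ) (y s : ℝ) : ℂ :=
  pd₁ (pd₂ F) y s * G y s - pd₂ F y s * pd₁ G y s - pd₁ F y s * pd₂ G y s
    + F y s * pd₁ (pd₂ G) y s

theorem hirotaDsDy_mul {F H : ℝ → ℝ → ℂ} (hF : ContDiff ℝ 2 ↿F) (hH : ContDiff ℝ 2 ↿H)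
    (y s : ℝ) :
    hirotaDsDy F (fun y s => F y s * H y s) y s
      = F y s ^ 2 * pd₁ (pd₂ H) y s
        + 2 * H y s * (pd₁ (pd₂ F) y s * F y s - pd₂ F y s * pd₁ F y s) := by
  have hFd := hF.differentiable two_ne_zero
  have hHd := hH.differentiable two_ne_zero
  have hF₂ := (contDiff_uncurry_pd₂ hF (by norm_num)).differentiable one_ne_zero
  have hH₂ := (contDiff_uncurry_pd₂ hH (by norm_num)).differentiable one_ne_zero
  have hpd₂ : pd₂ (fun y s => F y s * H y s) = fun y s => pd₂ F y s * H y s + F y s * pd₂ H y s :=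
    funext₂ fun _ _ => pd₂_mul (hFd _) (hHd _)
  have hpd₁pd₂ : pd₁ (pd₂ fun y s => F y s * H y s) y s
      = pd₁ (pd₂ F) y s * H y s + pd₂ F y s * pd₁ H y s
        + (pd₁ F y s * pd₂ H y s + F y s * pd₁ (pd₂ H) y s) := by
    rw [hpd₂]
    exact (((hasDerivAt_pd₁ (hF₂ _)).mul (hasDerivAt_pd₁ (hHd _))).add
      ((hasDerivAt_pd₁ (hFd _)).mul (hasDerivAt_pd₁ (hH₂ _)))).deriv
  rw [hirotaDsDy, hpd₁pd₂, pd₁_mul (hFd _) (hHd _), pd₂_mul (hFd _) (hHd _)]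
  ring

theorem pd₁_pd₂_div_of_hirotaDsDy {f : ℝ → ℝ → ℝ} {g : ℝ → ℝ → ℂ} (hf : ContDiff ℝ 2 ↿f)
    (hf0 : ∀ y s, f y s ≠ 0) (hg : ContDiff ℝ 2 ↿g) {y s : ℝ}
    (hbil : hirotaDsDy (fun y s => (f y s : ℂ)) g y s = f y s * g y s) :
    pd₁ (pd₂ fun y s => g y s / f y s) y s
      = g y s / f y s * (1 - 2 * pd₁ (pd₂ fun y s => Real.log (f y s)) y s : ℝ) := by
  have hF : ContDiff ℝ 2 ↿(fun y s => (f y s : ℂ)) := ofRealCLM.contDiff.comp hf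
  have hH : ContDiff ℝ 2 ↿(fun y s => g y s / f y s) := by
    have : ↿(fun y s => g y s / f y s) = fun p => ↿g p * (((↿f p)⁻¹ : ℝ) : ℂ) := by
      funext ⟨y, s⟩
      show g y s / (f y s : ℂ) = g y s * (((f y s)⁻¹ : ℝ) : ℂ)
      rw [ofReal_inv, div_eq_mul_inv]
    exact this ▸ hg.mul (ofRealCLM.contDiff.comp (hf.inv fun p => hf0 p.1 p.2))
  have hg_eq : g = fun y s => (f y s : ℂ) * (g y s / f y s) :=
    funext₂ fun y s => (mul_div_cancel₀ _ (ofReal_ne_zero.2 (hf0 y s))).symm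
  have key := hirotaDsDy_mul hF hH y s
  rw [← hg_eq, hbil, pd₂_ofReal (hf.differentiable two_ne_zero),
    pd₁_ofReal ((contDiff_uncurry_pd₂ hf (by norm_num)).differentiable one_ne_zero),
    pd₁_ofReal (hf.differentiable two_ne_zero)] at key
  have hf0' : (f y s : ℂ) ≠ 0 := ofReal_ne_zero.2 (hf0 y s)
  rw [pd₁_pd₂_log hf hf0]
  push_cast
  field_simp at key ⊢
  linear_combination -key

theorem pd₂_hodograph_of_bilinear {f : ℝ → ℝ → ℝ} {g₁ g₂ Q₁ Q₂ : ℝ → ℝ → ℂ}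
    {φ : ℝ → ℝ → ℝ} (hf : ContDiff ℝ 2 ↿f) (hf0 : ∀ y s, f y s ≠ 0)
    (hbil : ∀ y s, 2 * (pd₂ (pd₂ f) y s * f y s - pd₂ f y s ^ 2)
      = 1 / 2 * (‖g₁ y s‖ ^ 2 + ‖g₂ y s‖ ^ 2))
    (hφ : ∀ y s, φ y s = y - 2 * pd₂ (fun y s => Real.log (f y s)) y s)
    (hrel₁ : ∀ y s, g₁ y s / f y s = Q₁ (φ y s) (-s))
    (hrel₂ : ∀ y s, g₂ y s / f y s = Q₂ (φ y s) (-s)) (y s : ℝ) :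
    pd₂ φ y s = -(1 / 2) * (‖Q₁ (φ y s) (-s)‖ ^ 2 + ‖Q₂ (φ y s) (-s)‖ ^ 2) := by
  have hL : ContDiff ℝ 2 ↿(fun y s => Real.log (f y s)) := hf.log fun p => hf0 p.1 p.2
  have hφ₂ : pd₂ φ y s = 0 - 2 * pd₂ (pd₂ fun y s => Real.log (f y s)) y s := by
    rw [funext₂ hφ]
    exact ((hasDerivAt_const s y).sub ((hasDerivAt_pd₂
      ((contDiff_uncurry_pd₂ hL (by norm_num)).differentiable one_ne_zero _)).const_mul 2)).deriv
  have hf0' := hf0 y s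
  rw [hφ₂, pd₂_pd₂_log hf hf0, ← hrel₁, ← hrel₂, norm_div, norm_div, norm_real, Real.norm_eq_abs,
    div_pow, div_pow, sq_abs]
  field_simp
  linear_combination -2 * hbil y s

theorem ccsp_component_of_bilinear {f : ℝ → ℝ → ℝ} {g Q : ℝ → ℝ → ℂ} {φ R : ℝ → ℝ → ℝ}
    (hf : ContDiff ℝ 2 ↿f) (hf0 : ∀ y s, f y s ≠ 0) (hg : ContDiff ℝ 2 ↿g)
    (hQ : ContDiff ℝ 2 ↿Q) (hR : ContDiff ℝ 1 ↿R)
    (hφ : ∀ y s, φ y s = y - 2 * pd₂ (fun y s => Real.log (f y s)) y s)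
    (hφR : ∀ y s, pd₂ φ y s = -(1 / 2) * R (φ y s) (-s))
    (hrel : ∀ y s, g y s / f y s = Q (φ y s) (-s)) {y s : ℝ}
    (hbil : hirotaDsDy (fun y s => (f y s : ℂ)) g y s = f y s * g y s)
    (hρ : 1 - 2 * pd₁ (pd₂ fun y s => Real.log (f y s)) y s ≠ 0) :
    pd₂ (pd₁ Q) (φ y s) (-s) + Q (φ y s) (-s)
      + 1 / 2 * pd₁ (fun x t => (R x t : ℂ) * pd₁ Q x t) (φ y s) (-s) = 0 := by
  have hL : ContDiff ℝ 2 ↿(fun y s => Real.log (f y s)) := hf.log fun p => hf0 p.1 p.2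
  have hL₂ : ContDiff ℝ 1 ↿(pd₂ fun y s => Real.log (f y s)) := contDiff_uncurry_pd₂ hL le_rfl
  have hφ_eq : φ = fun y s => y - 2 * pd₂ (fun y s => Real.log (f y s)) y s := funext₂ hφ
  have hφd : Differentiable ℝ ↿φ := by
    rw [hφ_eq]
    exact (contDiff_fst.sub (contDiff_const.mul hL₂)).differentiable one_ne_zero
  have hφ₁ : pd₁ φ y s = 1 - 2 * pd₁ (pd₂ fun y s => Real.log (f y s)) y s := by
    rw [hφ_eq]
    exact ((hasDerivAt_id' y).sub
      ((hasDerivAt_pd₁ (hL₂.differentiable one_ne_zero _)).const_mul 2)).deriv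
  have key := pd₁_pd₂_div_of_hirotaDsDy hf hf0 hg hbil
  rw [funext₂ hrel, ← hφ₁, hrel, pd₁_pd₂_comp_hodograph hQ hR hφd hφR] at key
  simp only [real_smul] at key
  have hfactor : ((pd₁ φ y s : ℝ) : ℂ) * (pd₂ (pd₁ Q) (φ y s) (-s) + Q (φ y s) (-s)
      + 1 / 2 * pd₁ (fun x t => (R x t : ℂ) * pd₁ Q x t) (φ y s) (-s)) = 0 := by
    push_cast at key
    linear_combination -key
  exact (mul_eq_zero.1 hfactor).resolve_left (ofReal_ne_zero.2 (hφ₁ ▸ hρ))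

/-- If `(f, g₁, g₂)` solve the CCSP bilinear system and `Q₁, Q₂` are obtained from
`g₁/f, g₂/f` through the hodograph transformation `x = y − 2 (log f)_s`, `t = −s`,
then `Q₁, Q₂` satisfy the coupled complex short pulse equations wherever
`1 − 2 (log f)_{sy} ≠ 0`. -/
theorem ccsp_from_bilinear
    (f : ℝ → ℝ → ℝ) (g₁ g₂ : ℝ → ℝ → ℂ) (Q₁ Q₂ : ℝ → ℝ → ℂ)
    (hf : ContDiff ℝ 3 (fun p : ℝ × ℝ => f p.1 p.2))
    (hfpos : ∀ y s, 0 < f y s)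
    (hg₁ : ContDiff ℝ 2 (fun p : ℝ × ℝ => g₁ p.1 p.2))
    (hg₂ : ContDiff ℝ 2 (fun p : ℝ × ℝ => g₂ p.1 p.2))
    (hQ₁ : ContDiff ℝ 2 (fun p : ℝ × ℝ => Q₁ p.1 p.2))
    (hQ₂ : ContDiff ℝ 2 (fun p : ℝ × ℝ => Q₂ p.1 p.2))
    (hbil1 : ∀ g, (g = g₁ ∨ g = g₂) → ∀ y s,
      pd1C (pd2C (fun y' s' => (f y' s' : ℂ))) y s * g y s
        - pd2C (fun y' s' => (f y' s' : ℂ)) y s * pd1C g y s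
        - pd1C (fun y' s' => (f y' s' : ℂ)) y s * pd2C g y s
        + (f y s : ℂ) * pd1C (pd2C g) y s
      = (f y s : ℂ) * g y s)
    (hbil2 : ∀ y s,
      2 * (pd2R (pd2R f) y s * f y s - (pd2R f y s)^2)
        = (1/2) * (‖g₁ y s‖^2 + ‖g₂ y s‖^2))
    (φ : ℝ → ℝ → ℝ)
    (hφ : ∀ y s, φ y s = y - 2 * pd2R f y s / f y s)
    (hrel₁ : ∀ y s, g₁ y s / (f y s : ℂ) = Q₁ (φ y s) (-s))
    (hrel₂ : ∀ y s, g₂ y s / (f y s : ℂ) = Q₂ (φ y s) (-s)) :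
    ∀ y s, 1 - 2 * pd1R (pd2R (fun y' s' => Real.log (f y' s'))) y s ≠ 0 →
      (∀ Q, (Q = Q₁ ∨ Q = Q₂) →
        pd2C (pd1C Q) (φ y s) (-s) + Q (φ y s) (-s)
          + (1/2) * pd1C (fun x t =>
              (((‖Q₁ x t‖ : ℝ) : ℂ)^2 + ((‖Q₂ x t‖ : ℝ) : ℂ)^2)
                * pd1C Q x t) (φ y s) (-s)
        = 0) := by
  intro y s hρ Q hQ
  have hf₂ : ContDiff ℝ 2 ↿f := hf.of_le (by norm_num)
  have hf0 (y s : ℝ) : f y s ≠ 0 := (hfpos y s).ne'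
  have hφL (y s : ℝ) : φ y s = y - 2 * pd₂ (fun y s => Real.log (f y s)) y s := by
    rw [hφ, pd₂_log (hf₂.differentiable two_ne_zero) hf0, mul_div_assoc]
    rfl
  have hR : ContDiff ℝ 1 ↿(fun x t => ‖Q₁ x t‖ ^ 2 + ‖Q₂ x t‖ ^ 2) :=
    ((hQ₁.of_le one_le_two).norm_sq ℝ).add ((hQ₂.of_le one_le_two).norm_sq ℝ)
  have hφR := pd₂_hodograph_of_bilinear hf₂ hf0 hbil2 hφL hrel₁ hrel₂
  simp only [← ofReal_pow, ← ofReal_add]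
  rcases hQ with rfl | rfl
  · exact ccsp_component_of_bilinear hf₂ hf0 hg₁ hQ₁ hR hφL hφR hrel₁ (hbil1 _ (.inl rfl) y s) hρ
  · exact ccsp_component_of_bilinear hf₂ hf0 hg₂ hQ₂ hR hφL hφR hrel₂ (hbil1 _ (.inr rfl) y s) hρ
end

section
/- Let p₁ = p_{1R} + i p_{1I} ∈ ℂ with p_{1R} > 0 and let α₁ ∈ ℂ, α₁ ≠ 0. With f(y,s) = −1 − (|α₁|² |p₁|⁴ / (4 (p₁ + conj(p₁))²)) e^{η₁ + conj(η₁)}, η₁(y,s) = p₁ y + s/p₁, η_{1R}(y,s) = p_{1R}(y + s/|p₁|²), and η_{10} = log(|α₁| |p₁|² / (4 p_{1R})), the hodograph coordinate x(y,s) = y − 2 f_s(y,s)/f(y,s) satisfies, for all (y,s) ∈ ℝ²: x(y,s) = y − (2 p_{1R}/|p₁|²) (tanh(η_{1R}(y,s) + η_{10}) + 1). -/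
/-! Because `p₁ + conj p₁ = 2 p_{1R}` and `η₁ + conj η₁ = 2 η_{1R}`, the tau function is real,
`f = -1 - exp (2 (η_{1R} + η_{10}))`: the square of `|α₁| |p₁|² / (4 p_{1R})` in front of the
exponential is absorbed as `exp (2 η_{10})`. For fixed `y`, `η_{1R}` is affine in `s` with slope
`p_{1R}/|p₁|²`, and `tanh u + 1 = 2 e^{2u} / (1 + e^{2u})` turns `-2 f_s / f` into the claimed
expression. -/

open Complex

/-- Partial derivative in the second variable (`s`) of a complex-valued function. -/
noncomputable def pdsC (F : ℝ → ℝ → ℂ) (y s : ℝ) : ℂ := deriv (fun s' => F y s') s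

open ComplexConjugate

theorem Real.tanh_add_one (u : ℝ) :
    Real.tanh u + 1 = 2 * Real.exp (2 * u) / (1 + Real.exp (2 * u)) := by
  have := Real.exp_pos u
  rw [Real.tanh_eq, Real.exp_neg, show 2 * u = u + u by ring, Real.exp_add]
  field_simp
  ring

theorem Real.sq_mul_exp_two_mul {a : ℝ} (ha : 0 < a) (u : ℝ) :
    a ^ 2 * Real.exp (2 * u) = Real.exp (2 * (u + Real.log a)) := by
  rw [mul_add, Real.exp_add, two_mul (Real.log a), Real.exp_add, Real.exp_log ha]
  ring

/-- `f y` in real form, with `k = p_{1R}/|p₁|²` and `b = p_{1R} y + η_{10}`. -/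
noncomputable def solitonTau (k b s : ℝ) : ℝ := -1 - Real.exp (2 * (k * s + b))

theorem hasDerivAt_solitonTau (k b s : ℝ) :
    HasDerivAt (solitonTau k b) (-(2 * k * Real.exp (2 * (k * s + b)))) s := by
  have hlin := (((hasDerivAt_id s).const_mul k).add_const b).const_mul 2
  exact (hlin.exp.const_sub (-1)).congr_deriv (by simp only [id, mul_one]; ring)

theorem two_mul_deriv_solitonTau_div (k b s : ℝ) :
    2 * deriv (solitonTau k b) s / solitonTau k b s = 2 * k * (Real.tanh (k * s + b) + 1) := by
  have hpos := Real.exp_pos (2 * (k * s + b))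
  have hne : -1 - Real.exp (2 * (k * s + b)) ≠ 0 := by linarith
  have hne' : 1 + Real.exp (2 * (k * s + b)) ≠ 0 := by linarith
  rw [(hasDerivAt_solitonTau k b s).deriv, Real.tanh_add_one, solitonTau]
  field_simp
  ring

theorem Complex.re_mul_ofReal_add_ofReal_div (p : ℂ) (y s : ℝ) :
    (p * y + s / p).re = p.re * (y + s / normSq p) := by
  simp only [add_re, mul_re, div_re, ofReal_re, ofReal_im]
  ring

theorem Complex.exp_add_conj (z : ℂ) : exp (z + conj z) = Real.exp (2 * z.re) := by
  rw [add_conj, ofReal_exp, ofReal_mul, ofReal_ofNat]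

theorem Complex.norm_sq_mul_norm_pow_four_div_sq_add_conj (α p : ℂ) :
    (‖α‖ : ℂ) ^ 2 * (‖p‖ : ℂ) ^ 4 / (4 * (p + conj p) ^ 2)
      = ((‖α‖ * normSq p / (4 * p.re)) ^ 2 : ℝ) := by
  rw [add_conj, normSq_eq_norm_sq]
  push_cast
  ring

theorem neg_one_sub_coeff_mul_exp_eq_solitonTau {α p : ℂ} (hα : α ≠ 0) (hp : 0 < p.re)
    (y s : ℝ) :
    -1 - ((‖α‖ : ℂ) ^ 2 * (‖p‖ : ℂ) ^ 4 / (4 * (p + conj p) ^ 2))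
        * exp ((p * y + s / p) + conj (p * y + s / p))
      = solitonTau (p.re / normSq p) (p.re * y + Real.log (‖α‖ * normSq p / (4 * p.re))) s := by
  have ha : 0 < ‖α‖ * normSq p / (4 * p.re) := by
    have : 0 < normSq p := normSq_pos.mpr (fun h => hp.ne' (by simp [h]))
    positivity
  rw [norm_sq_mul_norm_pow_four_div_sq_add_conj, exp_add_conj, re_mul_ofReal_add_ofReal_div,
    ← ofReal_mul, Real.sq_mul_exp_two_mul ha, solitonTau]
  push_cast
  ring_nf

/-- The hodograph coordinate `x = y − 2 f_s/f` of the one-soliton solution of the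
complex short pulse equation equals `y − (2 p_{1R}/|p₁|²)(tanh(η_{1R}+η_{10}) + 1)`. -/
theorem csp_one_soliton_hodograph
    (p1R p1I : ℝ) (hp : 0 < p1R) (α₁ : ℂ) (hα : α₁ ≠ 0)
    (p₁ : ℂ) (hp₁ : p₁ = ⟨p1R, p1I⟩)
    (η₁ : ℝ → ℝ → ℂ) (hη₁ : ∀ y s, η₁ y s = p₁ * (y : ℂ) + (s : ℂ) / p₁)
    (f : ℝ → ℝ → ℂ)
    (hf : ∀ y s, f y s = -1 -
      ((‖α₁‖ : ℂ)^2 * (‖p₁‖ : ℂ)^4 / (4 * (p₁ + starRingEnd ℂ p₁)^2))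
        * Complex.exp (η₁ y s + starRingEnd ℂ (η₁ y s)))
    (η1R : ℝ → ℝ → ℝ)
    (hη1R : ∀ y s, η1R y s = p1R * (y + s / (p1R^2 + p1I^2)))
    (η10 : ℝ)
    (hη10 : η10 = Real.log (‖α₁‖ * (p1R^2 + p1I^2) / (4 * p1R)))
    (x : ℝ → ℝ → ℂ)
    (hx : ∀ y s, x y s = (y : ℂ) - 2 * pdsC f y s / f y s) :
    ∀ y s, x y s
      = (y : ℂ) - (((2 * p1R / (p1R^2 + p1I^2)) * (Real.tanh (η1R y s + η10) + 1) : ℝ) : ℂ) := by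
  intro y s
  subst hp₁
  have hre : (⟨p1R, p1I⟩ : ℂ).re = p1R := rfl
  have hnormSq : normSq ⟨p1R, p1I⟩ = p1R ^ 2 + p1I ^ 2 := by rw [normSq_mk]; ring
  set k := p1R / (p1R ^ 2 + p1I ^ 2)
  set b := p1R * y + η10
  have hfy : (fun s' => f y s') = fun s' => (solitonTau k b s' : ℂ) := by
    funext s'
    rw [hf, hη₁, neg_one_sub_coeff_mul_exp_eq_solitonTau hα hp, hre, hnormSq, ← hη10]
  have hfs : pdsC f y s = deriv (solitonTau k b) s := by
    rw [pdsC, hfy]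
    exact (hasDerivAt_solitonTau k b s).differentiableAt.hasDerivAt.ofReal_comp.deriv
  have harg : η1R y s + η10 = k * s + b := by rw [hη1R]; ring
  rw [hx, hfs, congrFun hfy s, harg, mul_div_assoc 2 p1R, ← two_mul_deriv_solitonTau_div]
  push_cast
  ring
end

section
/- Let q : ℝ × ℝ → ℂ be twice continuously differentiable in (x,t) and satisfy the complex short pulse equation q_{xt} + q + (1/2)(|q|² q_x)_x = 0 everywhere. Then the local conservation law ∂_t √(1 + |q_x|²) + ∂_x ( (1/2)|q|² √(1 + |q_x|²) ) = 0 holds at every point (x,t). In particular √(1 + |q_x|²) is a conserved density, corresponding to the conserved Hamiltonian H₀ = ∫ √(1 + |q_x|²) dx. -/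
open Complex

/-- Partial derivative in the first (space) variable of a complex-valued function. -/
noncomputable def pdx (F : ℝ → ℝ → ℂ) (x t : ℝ) : ℂ := deriv (fun x' => F x' t) x

/-- Partial derivative in the second (time) variable of a complex-valued function. -/
noncomputable def pdt (F : ℝ → ℝ → ℂ) (x t : ℝ) : ℂ := deriv (fun t' => F x t') t

/-- Partial derivative in the first (space) variable of a real-valued function. -/
noncomputable def pdxR (F : ℝ → ℝ → ℝ) (x t : ℝ) : ℝ := deriv (fun x' => F x' t) x

/-- Partial derivative in the second (time) variable of a real-valued function. -/
noncomputable def pdtR (F : ℝ → ℝ → ℝ) (x t : ℝ) : ℝ := deriv (fun t' => F x t') t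

/-!
Write `p = q_x` and `ρ = √(1 + |p|²)`. The chain rule gives `ρ_t = ⟪p, p_t⟫ / ρ` and
`ρ_x = ⟪p, p_x⟫ / ρ` (real inner product on `ℂ`), while the equation says
`p_t = -q - ½ ((|q|²)_x p + |q|² p_x)` with `(|q|²)_x = 2⟪q, p⟫`. Substituting,
`ρ (ρ_t + (½ |q|² ρ)_x) = -⟪p, q⟫ + ⟪q, p⟫ (ρ² - |p|²) = 0`.
-/

open scoped RealInnerProductSpace

section PartialDerivatives

variable {E : Type*} [NormedAddCommGroup E] [NormedSpace ℝ E] {F : ℝ → ℝ → E} {x t : ℝ}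

theorem DifferentiableAt.hasDerivAt_partial_fst
    (hF : DifferentiableAt ℝ (fun p : ℝ × ℝ => F p.1 p.2) (x, t)) :
    HasDerivAt (fun x' => F x' t) (fderiv ℝ (fun p : ℝ × ℝ => F p.1 p.2) (x, t) (1, 0)) x :=
  hF.hasFDerivAt.comp_hasDerivAt (f := fun x' => (x', t)) x
    ((hasDerivAt_id x).prodMk (hasDerivAt_const x t))

theorem DifferentiableAt.hasDerivAt_partial_snd
    (hF : DifferentiableAt ℝ (fun p : ℝ × ℝ => F p.1 p.2) (x, t)) :
    HasDerivAt (fun t' => F x t') (fderiv ℝ (fun p : ℝ × ℝ => F p.1 p.2) (x, t) (0, 1)) t :=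
  hF.hasFDerivAt.comp_hasDerivAt (f := fun t' => (x, t')) t
    ((hasDerivAt_const t x).prodMk (hasDerivAt_id t))

end PartialDerivatives

section ComplexPartialDerivatives

variable {F : ℝ → ℝ → ℂ} {x t : ℝ}

theorem hasDerivAt_pdx (hF : DifferentiableAt ℝ (fun p : ℝ × ℝ => F p.1 p.2) (x, t)) :
    HasDerivAt (fun x' => F x' t) (pdx F x t) x :=
  hF.hasDerivAt_partial_fst.differentiableAt.hasDerivAt

theorem hasDerivAt_pdt (hF : DifferentiableAt ℝ (fun p : ℝ × ℝ => F p.1 p.2) (x, t)) :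
    HasDerivAt (fun t' => F x t') (pdt F x t) t :=
  hF.hasDerivAt_partial_snd.differentiableAt.hasDerivAt

theorem contDiff_pdx {n : WithTop ℕ∞} (hF : ContDiff ℝ (n + 1) (fun p : ℝ × ℝ => F p.1 p.2)) :
    ContDiff ℝ n (fun p : ℝ × ℝ => pdx F p.1 p.2) := by
  have hdiff := hF.differentiable (by simp)
  have hpdx : (fun p : ℝ × ℝ => pdx F p.1 p.2)
      = fun p => fderiv ℝ (fun p : ℝ × ℝ => F p.1 p.2) p (1, 0) :=
    funext fun p => (hdiff p).hasDerivAt_partial_fst.deriv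
  rw [hpdx]
  exact (hF.fderiv_right le_rfl).clm_apply contDiff_const

end ComplexPartialDerivatives

section InnerProductSpace

variable {E : Type*} [NormedAddCommGroup E] [InnerProductSpace ℝ E]

theorem HasDerivAt.sqrt_one_add_norm_sq {f : ℝ → E} {f' : E} {x : ℝ} (hf : HasDerivAt f f' x) :
    HasDerivAt (fun y => √(1 + ‖f y‖ ^ 2)) (⟪f x, f'⟫ / √(1 + ‖f x‖ ^ 2)) x := by
  convert (hf.norm_sq.const_add 1).sqrt (by positivity) using 1
  field_simp

theorem csp_density_flux_identity {q p px pt : E}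
    (h : pt + q + (1 / 2 : ℝ) • (‖q‖ ^ 2 • px + (2 * ⟪q, p⟫) • p) = 0) :
    ⟪p, pt⟫ / √(1 + ‖p‖ ^ 2)
      + (1 / 2 * (2 * ⟪q, p⟫) * √(1 + ‖p‖ ^ 2)
        + 1 / 2 * ‖q‖ ^ 2 * (⟪p, px⟫ / √(1 + ‖p‖ ^ 2))) = 0 := by
  have hρ2 : √(1 + ‖p‖ ^ 2) ^ 2 = 1 + ‖p‖ ^ 2 := Real.sq_sqrt (by positivity)
  have hp := congrArg (⟪p, ·⟫) h
  simp only [inner_add_right, inner_smul_right, real_inner_self_eq_norm_sq, inner_zero_right,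
    real_inner_comm q p] at hp
  field_simp
  linear_combination 2 * hp + 2 * ⟪q, p⟫ * hρ2

end InnerProductSpace

/-- The local conservation law `∂_t √(1+|q_x|²) + ∂_x ((1/2)|q|² √(1+|q_x|²)) = 0`
for solutions of the complex short pulse equation. -/
theorem csp_conservation_law
    (q : ℝ → ℝ → ℂ)
    (hq : ContDiff ℝ 2 (fun p : ℝ × ℝ => q p.1 p.2))
    (heq : ∀ x t,
      pdt (pdx q) x t + q x t
        + (1/2) * pdx (fun x' t' => ((‖q x' t'‖ : ℝ) : ℂ)^2 * pdx q x' t') x t = 0) :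
    ∀ x t,
      pdtR (fun x' t' => Real.sqrt (1 + (‖pdx q x' t'‖)^2)) x t
        + pdxR (fun x' t' =>
            (1/2) * (‖q x' t'‖)^2
              * Real.sqrt (1 + (‖pdx q x' t'‖)^2)) x t
      = 0 := by
  intro x t
  have hq_x := hasDerivAt_pdx ((hq.differentiable (by simp)) (x, t))
  have hp := (contDiff_pdx (n := 1) hq).differentiable one_ne_zero (x, t)
  have hp_x := hasDerivAt_pdx hp
  have hp_t := hasDerivAt_pdt hp
  have hflux : pdx (fun x' t' => ((‖q x' t'‖ : ℝ) : ℂ) ^ 2 * pdx q x' t') x t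
      = ‖q x t‖ ^ 2 • pdx (pdx q) x t + (2 * ⟪q x t, pdx q x t⟫) • pdx q x t := by
    simp only [pdx, ← Complex.ofReal_pow, ← Complex.real_smul]
    exact (hq_x.norm_sq.fun_smul hp_x).deriv
  rw [pdtR, pdxR, hp_t.sqrt_one_add_norm_sq.deriv,
    ((hq_x.norm_sq.const_mul (1 / 2)).fun_mul hp_x.sqrt_one_add_norm_sq).deriv]
  apply csp_density_flux_identity
  simpa only [hflux, Complex.real_smul, Complex.ofReal_div, Complex.ofReal_one,
    Complex.ofReal_ofNat] using heq x t
end
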